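/- Let (X, T) be a metrizable topological space and let δ_T(x,A) = 0 if x is in the closure of A and δ_T(x,A) = ∞ otherwise. Then the approach space (X, δ_T) is *-metrizable for every continuous t-norm * on [0,1]. -/

import Mathlib

/-!
On a metric space take the distance distributions `α(x, y, t) = t / (t + d(x, y))`. They form a
probabilistic metric for the minimum t-norm, because `t / (t + d)` is monotone in `t`, antitone in
`d`, and the mediant `(r + s) / ((r + a) + (s + b))` lies above the smaller of `r / (r + a)` and
`s / (s + b)`. Since every t-norm lies below the minimum, it is a probabilistic metric for every
continuous t-norm. For finite `r > 0` we have `sup_{a ∈ A} r / (r + d(x, a)) = 1` exactly when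
`inf_{a ∈ A} d(x, a) = 0`, i.e. when `x ∈ closure A`, so `δ_α(x, A)` is `0` on the closure of `A`
and `∞` off it.
-/

open scoped ENNReal

/-- A distance distribution: a map `[0,∞] → [0,1]` with value `0` at `0`, `1` at `∞`,
monotone and left-continuous on `(0,∞)`. -/
structure IsDistanceDistribution (φ : ℝ≥0∞ → ℝ) : Prop where
  mem : ∀ t, φ t ∈ Set.Icc (0:ℝ) 1
  zero : φ 0 = 0
  top : φ ⊤ = 1
  mono : Monotone φ
  leftCont : ∀ t : ℝ≥0∞, 0 < t → t ≠ ⊤ → φ t = ⨆ s : {s : ℝ≥0∞ // s < t}, φ s.1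

/-- A continuous t-norm on the interval `[a,b] ⊆ ℝ`. -/
structure IsContinuousTNorm (a b : ℝ) (m : ℝ → ℝ → ℝ) : Prop where
  mem : ∀ ⦃p q : ℝ⦄, p ∈ Set.Icc a b → q ∈ Set.Icc a b → m p q ∈ Set.Icc a b
  comm : ∀ ⦃p q : ℝ⦄, p ∈ Set.Icc a b → q ∈ Set.Icc a b → m p q = m q p
  assoc : ∀ ⦃p q r : ℝ⦄, p ∈ Set.Icc a b → q ∈ Set.Icc a b → r ∈ Set.Icc a b →
    m (m p q) r = m p (m q r)
  unit : ∀ ⦃p : ℝ⦄, p ∈ Set.Icc a b → m p b = p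
  mono : ∀ ⦃p p' q q' : ℝ⦄, p ∈ Set.Icc a b → p' ∈ Set.Icc a b → q ∈ Set.Icc a b →
    q' ∈ Set.Icc a b → p ≤ p' → q ≤ q' → m p q ≤ m p' q'
  continuous : ContinuousOn (fun x : ℝ × ℝ => m x.1 x.2) (Set.Icc a b ×ˢ Set.Icc a b)

/-- `α` is a probabilistic metric on `X` with respect to the t-norm `m` on `[0,1]`. -/
structure IsProbMetric {X : Type*} (m : ℝ → ℝ → ℝ) (α : X → X → ℝ≥0∞ → ℝ) : Prop where
  dd : ∀ x y, IsDistanceDistribution (α x y)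
  refl : ∀ x (t : ℝ≥0∞), 0 < t → α x x t = 1
  symm : ∀ x y t, α x y t = α y x t
  sep : ∀ x y, (∀ t : ℝ≥0∞, 0 < t → α x y t = 1) → x = y
  triangle : ∀ x y z (r s : ℝ≥0∞), m (α y z r) (α x y s) ≤ α x z (r + s)

/-- The approach distance induced by a probabilistic metric:
`δ_α(x,A) = inf { r | sup_{a ∈ A} α(x,a,r) = 1 }`. -/
noncomputable def probDist {X : Type*} (α : X → X → ℝ≥0∞ → ℝ) (x : X) (A : Set X) : ℝ≥0∞ :=
  sInf {r : ℝ≥0∞ | sSup ((fun a => α x a r) '' A) = 1}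

/-- `δ` is an approach structure on `X`. -/
structure IsApproach {X : Type*} (δ : X → Set X → ℝ≥0∞) : Prop where
  point : ∀ x, δ x {x} = 0
  empty : ∀ x, δ x (∅ : Set X) = ⊤
  union : ∀ x A B, δ x (A ∪ B) = min (δ x A) (δ x B)
  triangle : ∀ x (A B : Set X), δ x A ≤ (⨆ b : B, δ b.1 A) + δ x B

/-- An approach structure is probabilistic metrizable w.r.t. the t-norm `m`. -/
def ProbMetrizable {X : Type*} (m : ℝ → ℝ → ℝ) (δ : X → Set X → ℝ≥0∞) : Prop :=
  ∃ α : X → X → ℝ≥0∞ → ℝ, IsProbMetric m α ∧ ∀ x A, δ x A = probDist α x A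

/-- The minimum t-norm. -/
def minT : ℝ → ℝ → ℝ := fun p q => min p q
/-- The product t-norm. -/
def prodT : ℝ → ℝ → ℝ := fun p q => p * q
/-- The Łukasiewicz t-norm. -/
def lukT : ℝ → ℝ → ℝ := fun p q => max 0 (p + q - 1)

/-- `q⁻`: the largest idempotent element of `m` in `[a, q]`. -/
noncomputable def idemBelow (a : ℝ) (m : ℝ → ℝ → ℝ) (q : ℝ) : ℝ :=
  sSup {p : ℝ | p ∈ Set.Icc a q ∧ m p p = p}

open Set Filter Topology

lemma IsContinuousTNorm.apply_le_min {a b : ℝ} {m : ℝ → ℝ → ℝ} (hm : IsContinuousTNorm a b m)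
    {p q : ℝ} (hp : p ∈ Icc a b) (hq : q ∈ Icc a b) : m p q ≤ min p q := by
  have hb : b ∈ Icc a b := ⟨hp.1.trans hp.2, le_rfl⟩
  refine le_min ?_ ?_
  · calc m p q ≤ m p b := hm.mono hp hp hq hb le_rfl hq.2
      _ = p := hm.unit hp
  · calc m p q = m q p := hm.comm hp hq
      _ ≤ m q b := hm.mono hq hq hp hb le_rfl hp.2
      _ = q := hm.unit hq

lemma IsProbMetric.of_minT {X : Type*} {α : X → X → ℝ≥0∞ → ℝ} (hα : IsProbMetric minT α)
    {m : ℝ → ℝ → ℝ} (hm : IsContinuousTNorm 0 1 m) : IsProbMetric m α where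
  __ := hα
  triangle x y z r s :=
    (hm.apply_le_min ((hα.dd y z).mem r) ((hα.dd x y).mem s)).trans (hα.triangle x y z r s)

lemma ProbMetrizable.of_minT {X : Type*} {δ : X → Set X → ℝ≥0∞} (hδ : ProbMetrizable minT δ)
    {m : ℝ → ℝ → ℝ} (hm : IsContinuousTNorm 0 1 m) : ProbMetrizable m δ :=
  let ⟨α, hα, hδα⟩ := hδ
  ⟨α, hα.of_minT hm, hδα⟩

lemma Monotone.eq_iSup_lt_of_continuousWithinAt {α β : Type*} [LinearOrder α]
    [TopologicalSpace α] [OrderTopology α] [ConditionallyCompleteLinearOrder β]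
    [TopologicalSpace β] [OrderTopology β] {f : α → β} (hf : Monotone f) {t : α}
    [(𝓝[<] t).NeBot] (hft : ContinuousWithinAt f (Iio t) t) :
    f t = ⨆ s : {s : α // s < t}, f s := by
  have h := tendsto_nhds_unique hft.tendsto (hf.tendsto_nhdsLT t)
  rwa [sSup_image'] at h

section DivAdd

variable {u v d d' : ℝ}

lemma div_add_nonneg (hu : 0 ≤ u) (hd : 0 ≤ d) : 0 ≤ u / (u + d) := by positivity

lemma div_add_le_one (hu : 0 ≤ u) (hd : 0 ≤ d) : u / (u + d) ≤ 1 :=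
  div_le_one_of_le₀ (by linarith) (by linarith)

lemma div_add_le_div_add_left (hu : 0 ≤ u) (huv : u ≤ v) (hd : 0 ≤ d) :
    u / (u + d) ≤ v / (v + d) := by
  rcases hu.eq_or_lt with rfl | hu
  · simpa using div_add_nonneg (hu.trans huv) hd
  · rw [div_le_div_iff₀ (by linarith) (by linarith)]
    nlinarith

lemma div_add_le_div_add_right (hu : 0 ≤ u) (hd' : 0 < d') (hdd : d' ≤ d) :
    u / (u + d) ≤ u / (u + d') :=
  div_le_div_of_nonneg_left hu (by positivity) (by linarith)

lemma one_sub_div_le_div_add (hu : 0 < u) (hd : 0 ≤ d) : 1 - d / u ≤ u / (u + d) := by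
  rw [sub_le_iff_le_add, div_add_div _ _ (by positivity) hu.ne', le_div_iff₀ (by positivity)]
  nlinarith [mul_nonneg hd hd]

lemma div_add_le_add_div_add_of_mul_le {r s a b c : ℝ} (hr : 0 ≤ r) (hs : 0 ≤ s) (ha : 0 ≤ a)
    (hc : 0 ≤ c) (hcab : c ≤ a + b) (h : r * b ≤ s * a) :
    r / (r + a) ≤ (r + s) / (r + s + c) := by
  rcases hr.eq_or_lt with rfl | hr
  · simpa using div_add_nonneg hs hc
  · rw [div_le_div_iff₀ (by linarith) (by linarith)]
    nlinarith

lemma min_div_add_le_div_add {r s a b c : ℝ} (hr : 0 ≤ r) (hs : 0 ≤ s) (ha : 0 ≤ a)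
    (hb : 0 ≤ b) (hc : 0 ≤ c) (hcab : c ≤ a + b) :
    min (r / (r + a)) (s / (s + b)) ≤ (r + s) / (r + s + c) := by
  rcases le_total (r * b) (s * a) with h | h
  · exact (min_le_left _ _).trans (div_add_le_add_div_add_of_mul_le hr hs ha hc hcab h)
  · refine (min_le_right _ _).trans ?_
    rw [add_comm r s]
    exact div_add_le_add_div_add_of_mul_le hs hr hb hc (by linarith) h

end DivAdd

/-- Replaces the paper's `1 - exp (-t / d(x, y))`: what matters is that it stays below `1` for
finite `t` unless `d(x, y) = 0`, and tends to `1` as `d(x, y) → 0`. -/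
noncomputable def distRatio {X : Type*} [MetricSpace X] (x y : X) (t : ℝ≥0∞) : ℝ :=
  if t = ⊤ then 1 else t.toReal / (t.toReal + dist x y)

namespace distRatio

variable {X : Type*} [MetricSpace X] (x y z : X)

@[simp] lemma apply_top : distRatio x y ⊤ = 1 := if_pos rfl

lemma apply_of_ne_top {t : ℝ≥0∞} (ht : t ≠ ⊤) :
    distRatio x y t = t.toReal / (t.toReal + dist x y) := if_neg ht

@[simp] lemma apply_zero : distRatio x y 0 = 0 := by simp [distRatio]

lemma mem_Icc (t : ℝ≥0∞) : distRatio x y t ∈ Icc (0 : ℝ) 1 := by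
  rcases eq_or_ne t ⊤ with rfl | ht
  · simp
  · rw [apply_of_ne_top x y ht]
    exact ⟨div_add_nonneg ENNReal.toReal_nonneg dist_nonneg,
      div_add_le_one ENNReal.toReal_nonneg dist_nonneg⟩

lemma monotone : Monotone (distRatio x y) := by
  intro s t hst
  rcases eq_or_ne t ⊤ with rfl | ht
  · simpa using (mem_Icc x y s).2
  · rw [apply_of_ne_top x y ht, apply_of_ne_top x y (ne_top_of_le_ne_top ht hst)]
    exact div_add_le_div_add_left ENNReal.toReal_nonneg
      (ENNReal.toReal_mono ht hst) dist_nonneg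

lemma continuousAt {t : ℝ≥0∞} (ht₀ : t ≠ 0) (ht : t ≠ ⊤) : ContinuousAt (distRatio x y) t := by
  have heq : (fun s : ℝ≥0∞ => s.toReal / (s.toReal + dist x y)) =ᶠ[𝓝 t] distRatio x y :=
    (eventually_ne_nhds ht).mono fun s hs => (apply_of_ne_top x y hs).symm
  have hcont := ENNReal.continuousAt_toReal ht
  refine ContinuousAt.congr ?_ heq
  exact hcont.div (hcont.add continuousAt_const)
    (by have := ENNReal.toReal_pos ht₀ ht; positivity)

lemma isDistanceDistribution : IsDistanceDistribution (distRatio x y) where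
  mem := mem_Icc x y
  zero := apply_zero x y
  top := apply_top x y
  mono := monotone x y
  leftCont t ht ht' :=
    have : (𝓝[<] t).NeBot := nhdsLT_neBot_of_exists_lt ⟨0, ht⟩
    (monotone x y).eq_iSup_lt_of_continuousWithinAt
      (continuousAt x y ht.ne' ht').continuousWithinAt

lemma self {t : ℝ≥0∞} (ht : 0 < t) : distRatio x x t = 1 := by
  rcases eq_or_ne t ⊤ with rfl | ht'
  · simp
  · rw [apply_of_ne_top x x ht', dist_self, add_zero,
      div_self (ENNReal.toReal_pos ht.ne' ht').ne']

lemma comm (t : ℝ≥0∞) : distRatio x y t = distRatio y x t := by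
  simp only [distRatio, dist_comm]

lemma eq_of_forall_eq_one (h : ∀ t : ℝ≥0∞, 0 < t → distRatio x y t = 1) : x = y := by
  have h1 := h 1 one_pos
  rw [apply_of_ne_top x y ENNReal.one_ne_top, ENNReal.toReal_one,
    div_eq_one_iff_eq (by positivity)] at h1
  exact dist_le_zero.mp (by linarith)

lemma min_le_add (r s : ℝ≥0∞) :
    min (distRatio y z r) (distRatio x y s) ≤ distRatio x z (r + s) := by
  rcases eq_or_ne (r + s) ⊤ with h | h
  · rw [h, apply_top]
    exact (min_le_left _ _).trans (mem_Icc y z r).2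
  · obtain ⟨hr, hs⟩ := ENNReal.add_ne_top.mp h
    rw [apply_of_ne_top y z hr, apply_of_ne_top x y hs, apply_of_ne_top x z h,
      ENNReal.toReal_add hr hs]
    exact min_div_add_le_div_add ENNReal.toReal_nonneg ENNReal.toReal_nonneg dist_nonneg
      dist_nonneg dist_nonneg ((dist_triangle x y z).trans_eq (add_comm _ _))

lemma isProbMetric : IsProbMetric minT (distRatio (X := X)) where
  dd := isDistanceDistribution
  refl _ _ := self _
  symm := comm
  sep := eq_of_forall_eq_one
  triangle := min_le_add

variable {x} {A : Set X}

lemma bddAbove_image (r : ℝ≥0∞) : BddAbove ((fun a => distRatio x a r) '' A) :=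
  ⟨1, forall_mem_image.mpr fun a _ => (mem_Icc x a r).2⟩

lemma sSup_image_eq_one_iff {r : ℝ≥0∞} (hr : r ≠ ⊤) :
    sSup ((fun a => distRatio x a r) '' A) = 1 ↔ r ≠ 0 ∧ x ∈ closure A := by
  rcases eq_or_ne r 0 with rfl | hr₀
  · simp only [apply_zero, ne_eq, not_true_eq_false, false_and, iff_false]
    exact (Real.sSup_nonpos (forall_mem_image.mpr fun _ _ => le_rfl)).trans_lt one_pos |>.ne
  have hρ : 0 < r.toReal := ENNReal.toReal_pos hr₀ hr
  simp only [ne_eq, hr₀, not_false_eq_true, true_and]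
  constructor
  · intro hsup
    by_contra hx
    obtain ⟨ε, hε, hεA⟩ : ∃ ε > 0, ∀ a ∈ A, ε ≤ dist x a := by
      simpa [Metric.mem_closure_iff] using hx
    have hle : sSup ((fun a => distRatio x a r) '' A) ≤ r.toReal / (r.toReal + ε) :=
      Real.sSup_le (forall_mem_image.mpr fun a ha => (apply_of_ne_top x a hr).trans_le
        (div_add_le_div_add_right hρ.le hε (hεA a ha))) (by positivity)
    have hlt : r.toReal / (r.toReal + ε) < 1 := (div_lt_one (by positivity)).mpr (by linarith)
    linarith
  · intro hx
    refine le_antisymm (csSup_le ((closure_nonempty_iff.mp ⟨x, hx⟩).image _)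
      (forall_mem_image.mpr fun a _ => (mem_Icc x a r).2)) (le_of_forall_lt fun c hc => ?_)
    obtain ⟨a, ha, hxa⟩ := Metric.mem_closure_iff.mp hx (r.toReal * (1 - c))
      (by nlinarith)
    refine lt_csSup_of_lt (bddAbove_image r) (mem_image_of_mem _ ha) ?_
    rw [apply_of_ne_top x a hr]
    refine lt_of_lt_of_le ?_ (one_sub_div_le_div_add hρ dist_nonneg)
    rw [lt_sub_comm, div_lt_iff₀ hρ]
    linarith

open Classical in
lemma probDist_eq : probDist distRatio x A = if x ∈ closure A then 0 else ⊤ := by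
  split_ifs with hx
  · refine sInf_eq_bot.mpr fun b hb => ?_
    obtain ⟨r, hr, hrb⟩ := exists_between hb
    exact ⟨r, (sSup_image_eq_one_iff hrb.ne_top).mpr ⟨hr.ne', hx⟩, hrb⟩
  · refine sInf_eq_top.mpr fun r hr => ?_
    by_contra hr'
    exact hx ((sSup_image_eq_one_iff hr').mp hr).2

end distRatio

open Classical in
theorem stmt16 {X : Type*} [TopologicalSpace X] [TopologicalSpace.MetrizableSpace X]
    (m : ℝ → ℝ → ℝ) (hm : IsContinuousTNorm 0 1 m) :
    ProbMetrizable m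
      (fun (x : X) (A : Set X) => if x ∈ closure A then 0 else ⊤) := by
  let _ : MetricSpace X := TopologicalSpace.metrizableSpaceMetric X
  refine ProbMetrizable.of_minT ?_ hm
  exact ⟨distRatio, distRatio.isProbMetric, fun x A => distRatio.probDist_eq.symm⟩
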